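/- arXiv:0908.2256 — 6 statements merged into one kernel-verified Lean document; each statement's English description precedes it below -/
import Mathlib

section
/- Fix sizes s_{ij} ∈ [0,1] for i ∈ [n], j ∈ [m]. For any subset T ⊆ [n], let Alt(T) = { i ∈ T : for every j with s_{ij} > 0, T contains no item i' ≠ i with s_{i'j} > 1/2, and Σ_{i' ∈ T : 0 < s_{i'j} ≤ 1/2} s_{i'j} ≤ 1 }. Then Alt(T) is feasible: for every constraint j ∈ [m], Σ_{i ∈ Alt(T)} s_{ij} ≤ 1. -/
open Finset
open scoped Classical BigOperators

/-- The alteration map: keep `i ∈ T` iff for every constraint `j` in which `i`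
participates, `T` contains no other item that is big for `j`, and the total
size of items of `T` that are small for `j` is at most the capacity `1`. -/
noncomputable def altSet {n m : ℕ} (s : Fin n → Fin m → ℝ) (T : Finset (Fin n)) :
    Finset (Fin n) :=
  T.filter (fun i => ∀ j, 0 < s i j →
    (∀ i' ∈ T, i' ≠ i → s i' j ≤ 1/2) ∧
    (∑ i' ∈ T.filter (fun i'' => 0 < s i'' j ∧ s i'' j ≤ 1/2), s i' j) ≤ 1)

/-- the altered set is always feasible. -/
theorem altSet_feasible (n m : ℕ) (s : Fin n → Fin m → ℝ)
    (hs : ∀ i j, s i j ∈ Set.Icc (0:ℝ) 1)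
    (T : Finset (Fin n)) :
    ∀ j : Fin m, ∑ i ∈ altSet s T, s i j ≤ 1 := by
  intro j
  have hmem : ∀ i ∈ altSet s T, i ∈ T ∧ ∀ j, 0 < s i j →
      (∀ i' ∈ T, i' ≠ i → s i' j ≤ 1/2) ∧
      (∑ i' ∈ T.filter (fun i'' => 0 < s i'' j ∧ s i'' j ≤ 1/2), s i' j) ≤ 1 := by
    intro i hi
    simpa [altSet, Finset.mem_filter] using hi
  by_cases hb : ∃ i ∈ altSet s T, 1/2 < s i j
  · obtain ⟨i, hi, hbig⟩ := hb
    have hzero : ∀ i' ∈ altSet s T, i' ≠ i → s i' j = 0 := by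
      intro i' hi' hne
      by_contra h
      have hpos : 0 < s i' j := lt_of_le_of_ne (hs i' j).1 (Ne.symm h)
      have := ((hmem i' hi').2 j hpos).1 i (hmem i hi).1 (Ne.symm hne)
      linarith
    calc ∑ i' ∈ altSet s T, s i' j = s i j :=
          Finset.sum_eq_single_of_mem i hi (fun i' h hne => hzero i' h hne)
      _ ≤ 1 := (hs i j).2
  · push_neg at hb
    by_cases hp : ∃ i₀ ∈ altSet s T, 0 < s i₀ j
    · obtain ⟨i₀, hi₀, hpos⟩ := hp
      have hsum := ((hmem i₀ hi₀).2 j hpos).2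
      have h1 : ∑ i ∈ altSet s T, s i j
          = ∑ i ∈ (altSet s T).filter (fun i'' => 0 < s i'' j ∧ s i'' j ≤ 1/2), s i j := by
        refine (Finset.sum_filter_of_ne ?_).symm
        intro x hx hne
        exact ⟨lt_of_le_of_ne (hs x j).1 (Ne.symm hne), hb x hx⟩
      rw [h1]
      refine le_trans (Finset.sum_le_sum_of_subset_of_nonneg
        (Finset.filter_subset_filter _ (Finset.filter_subset _ _)) ?_) hsum
      intro x _ _
      exact (hs x j).1
    · push_neg at hp
      have : ∀ i ∈ altSet s T, s i j = 0 := fun i hi =>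
        le_antisymm (hp i hi) (hs i j).1
      rw [Finset.sum_congr rfl this]
      simp
end

section
/- Let x ∈ [0,1]^n be LP-feasible for a k-column-sparse packing instance, let α > 0 with αk ≥ 1, and let S be a random subset of [n] including each item i independently with probability x_i/(αk). For i ∈ [n] and j ∈ N(i), let B_{ij} be the event that S contains some item i' ≠ i with s_{i'j} > 1/2, and let G_j be the event that Σ_{i' ∈ S : 0 < s_{i'j} ≤ 1/2} s_{i'j} > 1. Then for every item i and every j ∈ N(i): Pr[B_{ij} | i ∈ S] + Pr[G_j | i ∈ S] ≤ 2/(αk). -/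
open Finset
open scoped Classical BigOperators

/-- Probability of the subset `T` under the product distribution on subsets of
`Fin n` with marginal probabilities `q`. -/
noncomputable def prodP {n : ℕ} (q : Fin n → ℝ) (T : Finset (Fin n)) : ℝ :=
  (∏ i ∈ T, q i) * ∏ i ∈ Tᶜ, (1 - q i)

/-- Probability of an event under the product distribution with marginals `q`. -/
noncomputable def prE {n : ℕ} (q : Fin n → ℝ) (E : Finset (Fin n) → Prop) : ℝ :=
  ∑ T : Finset (Fin n), if E T then prodP q T else 0

/-- Auxiliary weight: probability of picking exactly `T` from the ground set `E`. -/
noncomputable def Wfn {n : ℕ} (q : Fin n → ℝ) (E T : Finset (Fin n)) : ℝ :=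
  (∏ i ∈ T, q i) * ∏ i ∈ E \ T, (1 - q i)

lemma Wfn_nonneg {n : ℕ} {q : Fin n → ℝ} (hq0 : ∀ i, 0 ≤ q i) (hq1 : ∀ i, q i ≤ 1)
    (E T : Finset (Fin n)) : 0 ≤ Wfn q E T :=
  mul_nonneg (prod_nonneg fun i _ => hq0 i) (prod_nonneg fun i _ => by linarith [hq1 i])

lemma sum_Wfn {n : ℕ} (q : Fin n → ℝ) (E : Finset (Fin n)) :
    ∑ T ∈ E.powerset, Wfn q E T = 1 := by
  have h : ∏ i ∈ E, (q i + (1 - q i)) = ∑ T ∈ E.powerset, Wfn q E T :=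
    Finset.prod_add q _ E
  have h2 : ∏ i ∈ E, (q i + (1 - q i)) = 1 :=
    Finset.prod_eq_one (fun i _ => by ring)
  linarith

lemma Wfn_insert {n : ℕ} (q : Fin n → ℝ) {E T : Finset (Fin n)} {a : Fin n}
    (_ : a ∈ E) (hT : T ⊆ E.erase a) :
    Wfn q E (insert a T) = q a * Wfn q (E.erase a) T := by
  have haT : a ∉ T := fun h => (Finset.mem_erase.mp (hT h)).1 rfl
  have h1 : (∏ i ∈ insert a T, q i) = q a * ∏ i ∈ T, q i := Finset.prod_insert haT
  have h2 : E \ insert a T = E.erase a \ T := by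
    ext x
    simp only [Finset.mem_sdiff, Finset.mem_insert, Finset.mem_erase]
    tauto
  unfold Wfn
  rw [h1, h2]; ring

lemma marginal_Wfn {n : ℕ} (q : Fin n → ℝ) (E : Finset (Fin n)) {a : Fin n} (ha : a ∈ E) :
    ∑ T ∈ E.powerset, (if a ∈ T then Wfn q E T else 0) = q a := by
  have hnot : a ∉ E.erase a := Finset.notMem_erase a E
  rw [← Finset.insert_erase ha, Finset.sum_powerset_insert hnot]
  rw [Finset.insert_erase ha]
  have hz : ∑ T ∈ (E.erase a).powerset, (if a ∈ T then Wfn q E T else 0) = 0 := by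
    refine Finset.sum_eq_zero fun T hT => ?_
    have : a ∉ T := fun h => (Finset.mem_erase.mp (Finset.mem_powerset.mp hT h)).1 rfl
    simp [this]
  rw [hz, zero_add]
  have : ∀ T ∈ (E.erase a).powerset,
      (if a ∈ insert a T then Wfn q E (insert a T) else 0) = q a * Wfn q (E.erase a) T := by
    intro T hT
    rw [if_pos (Finset.mem_insert_self a T), Wfn_insert q ha (Finset.mem_powerset.mp hT)]
  rw [Finset.sum_congr rfl this, ← Finset.mul_sum, sum_Wfn, mul_one]

lemma prodP_eq_Wfn {n : ℕ} (q : Fin n → ℝ) (T : Finset (Fin n)) :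
    prodP q T = Wfn q univ T := by
  unfold prodP Wfn
  rw [Finset.compl_eq_univ_sdiff]

lemma prE_decomp {n : ℕ} (q : Fin n → ℝ) (i : Fin n) (P : Finset (Fin n) → Prop) :
    prE q (fun T => P T ∧ i ∈ T)
      = q i * ∑ T ∈ ((univ : Finset (Fin n)).erase i).powerset,
          (if P (insert i T) then Wfn q (univ.erase i) T else 0) := by
  have hiu : i ∈ (univ : Finset (Fin n)) := Finset.mem_univ i
  have hnot : i ∉ (univ : Finset (Fin n)).erase i := Finset.notMem_erase i univ
  have h0 : prE q (fun T => P T ∧ i ∈ T)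
      = ∑ T ∈ ((univ : Finset (Fin n)) : Finset (Fin n)).powerset,
          (if P T ∧ i ∈ T then prodP q T else 0) := by
    rw [Finset.powerset_univ]
    unfold prE
    exact Finset.sum_congr rfl fun T _ => by split_ifs <;> rfl
  rw [h0, ← Finset.insert_erase hiu, Finset.sum_powerset_insert hnot,
    Finset.insert_erase hiu]
  have hz : ∑ T ∈ ((univ : Finset (Fin n)).erase i).powerset,
      (if P T ∧ i ∈ T then prodP q T else 0) = 0 := by
    refine Finset.sum_eq_zero fun T hT => ?_
    have : i ∉ T := fun h => (Finset.mem_erase.mp (Finset.mem_powerset.mp hT h)).1 rfl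
    simp [this]
  rw [hz, zero_add, Finset.mul_sum]
  refine Finset.sum_congr rfl fun T hT => ?_
  have hTsub := Finset.mem_powerset.mp hT
  have hmem : i ∈ insert i T := Finset.mem_insert_self i T
  by_cases hP : P (insert i T)
  · rw [if_pos ⟨hP, hmem⟩, if_pos hP, prodP_eq_Wfn, Wfn_insert q hiu hTsub]
  · rw [if_neg (fun h => hP h.1), if_neg hP, mul_zero]

lemma prE_mem {n : ℕ} (q : Fin n → ℝ) (i : Fin n) :
    prE q (fun T => i ∈ T) = q i := by
  have h : prE q (fun T => i ∈ T)
      = ∑ T ∈ (univ : Finset (Fin n)).powerset, (if i ∈ T then Wfn q univ T else 0) := by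
    rw [Finset.powerset_univ]
    unfold prE
    exact Finset.sum_congr rfl fun T _ => by rw [prodP_eq_Wfn]; split_ifs <;> rfl
  rw [h, marginal_Wfn q univ (Finset.mem_univ i)]

/-- for an LP-feasible `x`, sampling each item independently with
probability `x i / (α k)`, for every item `i` and constraint `j ∈ N(i)`,
`Pr[B_ij | i ∈ S] + Pr[G_j | i ∈ S] ≤ 2/(αk)` (stated in multiplied-out form,
i.e. both conditional probabilities are multiplied through by `Pr[i ∈ S]`). -/
theorem big_small_bound (n m k : ℕ) (s : Fin n → Fin m → ℝ)
    (hs : ∀ i j, s i j ∈ Set.Icc (0:ℝ) 1)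
    (hsparse : ∀ i, ((univ : Finset (Fin m)).filter (fun j => 0 < s i j)).card ≤ k)
    (x : Fin n → ℝ) (hx : ∀ i, x i ∈ Set.Icc (0:ℝ) 1)
    (hLP : ∀ j, ∑ i, s i j * x i ≤ 1)
    (α : ℝ) (hα : 0 < α) (hαk : 1 ≤ α * k)
    (q : Fin n → ℝ) (hq : ∀ i, q i = x i / (α * k))
    (i : Fin n) (j : Fin m) (hij : 0 < s i j) :
    prE q (fun T => (∃ i' ∈ T, i' ≠ i ∧ 1/2 < s i' j) ∧ i ∈ T)
      + prE q (fun T =>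
          (1 < ∑ i' ∈ T.filter (fun i'' => 0 < s i'' j ∧ s i'' j ≤ 1/2), s i' j) ∧ i ∈ T)
      ≤ (2 / (α * k)) * prE q (fun T => i ∈ T) := by
  have hαk0 : (0:ℝ) < α * k := lt_of_lt_of_le zero_lt_one hαk
  have hq0 : ∀ i', 0 ≤ q i' := fun i' => by
    rw [hq]; exact div_nonneg (hx i').1 hαk0.le
  have hq1 : ∀ i', q i' ≤ 1 := fun i' => by
    rw [hq, div_le_one hαk0]; exact le_trans (hx i').2 hαk
  -- rewrite the three prE's
  rw [prE_decomp q i (fun T => ∃ i' ∈ T, i' ≠ i ∧ 1/2 < s i' j),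
    prE_decomp q i (fun T =>
      1 < ∑ i' ∈ T.filter (fun i'' => 0 < s i'' j ∧ s i'' j ≤ 1/2), s i' j),
    prE_mem q i]
  set E : Finset (Fin n) := (univ : Finset (Fin n)).erase i with hE
  set P := E.powerset with hP
  set SA := ∑ T ∈ P, (if ∃ i' ∈ insert i T, i' ≠ i ∧ 1/2 < s i' j then Wfn q E T else 0)
    with hSA
  set SB := ∑ T ∈ P, (if 1 < ∑ i' ∈ (insert i T).filter
      (fun i'' => 0 < s i'' j ∧ s i'' j ≤ 1/2), s i' j then Wfn q E T else 0) with hSB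
  have hWnn : ∀ T, 0 ≤ Wfn q E T := Wfn_nonneg hq0 hq1 E
  -- key inequality
  have hkey : SA + SB ≤ 2 / (α * k) := by
    have hpoint : ∀ T ∈ P,
        (if ∃ i' ∈ insert i T, i' ≠ i ∧ 1/2 < s i' j then Wfn q E T else 0)
        + (if 1 < ∑ i' ∈ (insert i T).filter
            (fun i'' => 0 < s i'' j ∧ s i'' j ≤ 1/2), s i' j then Wfn q E T else 0)
        ≤ (∑ i' ∈ T, 2 * s i' j) * Wfn q E T := by
      intro T hT
      have hTsub : T ⊆ E := Finset.mem_powerset.mp hT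
      have hiT : i ∉ T := fun h => (Finset.mem_erase.mp (hTsub h)).1 rfl
      have hsnn : ∀ i', 0 ≤ s i' j := fun i' => (hs i' j).1
      have hfbnn : (0:ℝ) ≤ ∑ i' ∈ T.filter (fun i'' => 1/2 < s i'' j), 2 * s i' j :=
        Finset.sum_nonneg fun i' _ => by linarith [hsnn i']
      have hfsnn : (0:ℝ) ≤ ∑ i' ∈ T.filter
          (fun i'' => 0 < s i'' j ∧ s i'' j ≤ 1/2), 2 * s i' j :=
        Finset.sum_nonneg fun i' _ => by linarith [hsnn i']
      -- indicator bounds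
      have hA : (if ∃ i' ∈ insert i T, i' ≠ i ∧ 1/2 < s i' j then Wfn q E T else 0)
          ≤ (∑ i' ∈ T.filter (fun i'' => 1/2 < s i'' j), 2 * s i' j) * Wfn q E T := by
        split_ifs with h
        · obtain ⟨i', hi'mem, hne, hbig⟩ := h
          have hi'T : i' ∈ T := by
            rcases Finset.mem_insert.mp hi'mem with h' | h'
            · exact absurd h' hne
            · exact h'
          have hmemf : i' ∈ T.filter (fun i'' => 1/2 < s i'' j) :=
            Finset.mem_filter.mpr ⟨hi'T, hbig⟩
          have h1 : (1:ℝ) ≤ ∑ i'' ∈ T.filter (fun i'' => 1/2 < s i'' j), 2 * s i'' j := by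
            have := Finset.single_le_sum (f := fun i'' => 2 * s i'' j)
              (fun a _ => by show (0:ℝ) ≤ 2 * s a j; linarith [hsnn a]) hmemf
            linarith
          nlinarith [hWnn T]
        · exact mul_nonneg hfbnn (hWnn T)
      have hB : (if 1 < ∑ i' ∈ (insert i T).filter
            (fun i'' => 0 < s i'' j ∧ s i'' j ≤ 1/2), s i' j then Wfn q E T else 0)
          ≤ (∑ i' ∈ T.filter (fun i'' => 0 < s i'' j ∧ s i'' j ≤ 1/2), 2 * s i' j)
            * Wfn q E T := by
        split_ifs with h
        · have hsum2 : (∑ i' ∈ T.filter (fun i'' => 0 < s i'' j ∧ s i'' j ≤ 1/2), 2 * s i' j)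
              = 2 * ∑ i' ∈ T.filter (fun i'' => 0 < s i'' j ∧ s i'' j ≤ 1/2), s i' j := by
            rw [Finset.mul_sum]
          have hsnnf : (0:ℝ) ≤ ∑ i' ∈ T.filter
              (fun i'' => 0 < s i'' j ∧ s i'' j ≤ 1/2), s i' j :=
            Finset.sum_nonneg fun i' _ => hsnn i'
          rw [Finset.filter_insert] at h
          have h1 : (1:ℝ) ≤ ∑ i' ∈ T.filter
              (fun i'' => 0 < s i'' j ∧ s i'' j ≤ 1/2), 2 * s i' j := by
            split_ifs at h with hsm
            · have hiTf : i ∉ T.filter (fun i'' => 0 < s i'' j ∧ s i'' j ≤ 1/2) :=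
                fun hmem => hiT (Finset.mem_filter.mp hmem).1
              rw [Finset.sum_insert hiTf] at h
              rw [hsum2]
              linarith [hsm.2]
            · rw [hsum2]; linarith
          nlinarith [hWnn T]
        · exact mul_nonneg hfsnn (hWnn T)
      have hC : (∑ i' ∈ T.filter (fun i'' => 1/2 < s i'' j), 2 * s i' j)
          + (∑ i' ∈ T.filter (fun i'' => 0 < s i'' j ∧ s i'' j ≤ 1/2), 2 * s i' j)
          ≤ ∑ i' ∈ T, 2 * s i' j := by
        rw [Finset.sum_filter, Finset.sum_filter, ← Finset.sum_add_distrib]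
        refine Finset.sum_le_sum fun i' _ => ?_
        have h0 := (hs i' j).1
        by_cases h2 : 0 < s i' j ∧ s i' j ≤ 1/2
        · obtain ⟨h2a, h2b⟩ := h2
          split_ifs <;> linarith
        · split_ifs <;> linarith
      calc _ ≤ ((∑ i' ∈ T.filter (fun i'' => 1/2 < s i'' j), 2 * s i' j)
              + ∑ i' ∈ T.filter (fun i'' => 0 < s i'' j ∧ s i'' j ≤ 1/2), 2 * s i' j)
              * Wfn q E T := by rw [add_mul]; exact add_le_add hA hB
        _ ≤ (∑ i' ∈ T, 2 * s i' j) * Wfn q E T :=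
              mul_le_mul_of_nonneg_right hC (hWnn T)
    have step1 : SA + SB ≤ ∑ T ∈ P, (∑ i' ∈ T, 2 * s i' j) * Wfn q E T := by
      rw [hSA, hSB, ← Finset.sum_add_distrib]
      exact Finset.sum_le_sum hpoint
    have step2 : ∑ T ∈ P, (∑ i' ∈ T, 2 * s i' j) * Wfn q E T
        = ∑ i' ∈ E, 2 * s i' j * q i' := by
      have hrw : ∀ T ∈ P, (∑ i' ∈ T, 2 * s i' j) * Wfn q E T
          = ∑ i' ∈ E, (if i' ∈ T then 2 * s i' j * Wfn q E T else 0) := by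
        intro T hT
        have hTsub : T ⊆ E := Finset.mem_powerset.mp hT
        rw [show (∑ i' ∈ T, 2 * s i' j) = ∑ i' ∈ E, (if i' ∈ T then 2 * s i' j else 0) by
          rw [Finset.sum_ite_mem, Finset.inter_eq_right.mpr hTsub]]
        rw [Finset.sum_mul]
        exact Finset.sum_congr rfl fun i' _ => by split_ifs <;> simp
      rw [Finset.sum_congr rfl hrw, Finset.sum_comm]
      refine Finset.sum_congr rfl fun i' hi' => ?_
      have : ∀ T ∈ P, (if i' ∈ T then 2 * s i' j * Wfn q E T else 0)
          = 2 * s i' j * (if i' ∈ T then Wfn q E T else 0) := by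
        intro T _; split_ifs <;> simp
      rw [Finset.sum_congr rfl this, ← Finset.mul_sum, marginal_Wfn q E hi']
    have step3 : ∑ i' ∈ E, 2 * s i' j * q i' ≤ 2 / (α * k) := by
      have heach : ∀ i' ∈ E, 2 * s i' j * q i' = (2 / (α * k)) * (s i' j * x i') := by
        intro i' _
        rw [hq]
        field_simp
      rw [Finset.sum_congr rfl heach, ← Finset.mul_sum]
      have hsub : ∑ i' ∈ E, s i' j * x i' ≤ 1 := by
        have h1 : ∑ i' ∈ E, s i' j * x i' ≤ ∑ i', s i' j * x i' := by
          refine Finset.sum_le_sum_of_subset_of_nonneg (Finset.subset_univ E)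
            fun i' _ _ => mul_nonneg (hs i' j).1 (hx i').1
        exact le_trans h1 (hLP j)
      have hc : (0:ℝ) ≤ 2 / (α * k) := by positivity
      calc (2 / (α * k)) * ∑ i' ∈ E, s i' j * x i' ≤ (2 / (α * k)) * 1 :=
            mul_le_mul_of_nonneg_left hsub hc
        _ = 2 / (α * k) := mul_one _
    linarith [step1, step2.le, step2.ge]
  have hqi : 0 ≤ q i := hq0 i
  have hfinal : q i * SA + q i * SB ≤ 2 / (α * ↑k) * q i :=
    calc q i * SA + q i * SB = q i * (SA + SB) := by ring
      _ ≤ q i * (2 / (α * ↑k)) := mul_le_mul_of_nonneg_left hkey hqi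
      _ = 2 / (α * ↑k) * q i := mul_comm _ _
  refine le_trans (le_of_eq ?_) hfinal
  rw [hSA, hSB]
  congr!
end

section
/- Let x ∈ [0,1]^n be LP-feasible for a k-column-sparse packing instance, let α > 0 with αk ≥ 1, and let S be a random subset of [n] including each item i independently with probability x_i/(αk). Let Alt(T) = { i ∈ T : for every j ∈ N(i), T contains no item i' ≠ i with s_{i'j} > 1/2, and Σ_{i' ∈ T : 0 < s_{i'j} ≤ 1/2} s_{i'j} ≤ 1 }. Then for every item i ∈ [n]: Pr[i ∈ Alt(S) | i ∈ S] ≥ 1 − 2/α. -/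
open Finset
open scoped Classical BigOperators

/-- The probability that `S` contains a fixed set `A` equals `∏ a ∈ A, q a`. -/
lemma sum_superset_prodP {n : ℕ} (q : Fin n → ℝ) (A : Finset (Fin n)) :
    ∑ T : Finset (Fin n), (if A ⊆ T then prodP q T else 0) = ∏ a ∈ A, q a := by
  classical
  set b : Fin n → ℝ := fun i => if i ∈ A then 0 else 1 - q i with hb
  have key : ∀ T : Finset (Fin n),
      (if A ⊆ T then prodP q T else 0) = (∏ i ∈ T, q i) * ∏ i ∈ Tᶜ, b i := by
    intro T
    by_cases h : A ⊆ T
    · rw [if_pos h]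
      unfold prodP
      congr 1
      refine Finset.prod_congr rfl (fun i hi => ?_)
      have : i ∉ A := fun hiA => (Finset.mem_compl.mp hi) (h hiA)
      simp [hb, this]
    · rw [if_neg h]
      obtain ⟨a, haA, haT⟩ := Finset.not_subset.mp h
      have : (∏ i ∈ Tᶜ, b i) = 0 :=
        Finset.prod_eq_zero (Finset.mem_compl.mpr haT) (by simp [hb, haA])
      rw [this, mul_zero]
  rw [Finset.sum_congr rfl (fun T _ => key T)]
  have hpa := Finset.prod_add q b (univ : Finset (Fin n))
  rw [Finset.powerset_univ] at hpa
  have hrw : ∀ T : Finset (Fin n),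
      (∏ i ∈ T, q i) * ∏ i ∈ (univ : Finset (Fin n)) \ T, b i
        = (∏ i ∈ T, q i) * ∏ i ∈ Tᶜ, b i := by
    intro T; rw [← Finset.compl_eq_univ_sdiff]
  rw [Finset.sum_congr rfl (fun T _ => hrw T)] at hpa
  rw [← hpa]
  rw [← Finset.prod_mul_prod_compl A (fun i => q i + b i)]
  have h1 : ∏ i ∈ A, (q i + b i) = ∏ a ∈ A, q a :=
    Finset.prod_congr rfl (fun a ha => by simp [hb, ha])
  have h2 : ∏ i ∈ Aᶜ, (q i + b i) = 1 :=
    Finset.prod_eq_one (fun a ha => by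
      have : a ∉ A := Finset.mem_compl.mp ha
      simp [hb, this])
  rw [h1, h2, mul_one]

/-- `Pr[i ∈ Alt(S) | i ∈ S] ≥ 1 - 2/α` (stated in multiplied-out
form, i.e. multiplied through by `Pr[i ∈ S]`; note `i ∈ Alt(S)` implies `i ∈ S`). -/
theorem survival_bound (n m k : ℕ) (s : Fin n → Fin m → ℝ)
    (hs : ∀ i j, s i j ∈ Set.Icc (0:ℝ) 1)
    (hsparse : ∀ i, ((univ : Finset (Fin m)).filter (fun j => 0 < s i j)).card ≤ k)
    (x : Fin n → ℝ) (hx : ∀ i, x i ∈ Set.Icc (0:ℝ) 1)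
    (hLP : ∀ j, ∑ i, s i j * x i ≤ 1)
    (α : ℝ) (hα : 0 < α) (hαk : 1 ≤ α * k)
    (q : Fin n → ℝ) (hq : ∀ i, q i = x i / (α * k))
    (i : Fin n) :
    prE q (fun T => i ∈ altSet s T) ≥ (1 - 2 / α) * prE q (fun T => i ∈ T) := by
  classical
  have hαk0 : (0:ℝ) < α * k := lt_of_lt_of_le one_pos hαk
  have hq01 : ∀ i', 0 ≤ q i' ∧ q i' ≤ 1 := by
    intro i'
    rw [hq i']
    constructor
    · exact div_nonneg (hx i').1 hαk0.le
    · rw [div_le_one hαk0]; exact le_trans (hx i').2 hαk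
  have hP : ∀ T, 0 ≤ prodP q T := by
    intro T
    unfold prodP
    apply mul_nonneg
    · exact Finset.prod_nonneg (fun i' _ => (hq01 i').1)
    · exact Finset.prod_nonneg (fun i' _ => by linarith [(hq01 i').2])
  -- marginal
  have hmarg : prE q (fun T => i ∈ T) = q i := by
    unfold prE
    have h := sum_superset_prodP q {i}
    simp only [Finset.singleton_subset_iff, Finset.prod_singleton] at h
    refine Eq.trans (Finset.sum_congr rfl fun T _ => ?_) h
    by_cases hT : i ∈ T <;> simp [hT]
  -- pairwise marginal
  have hpair : ∀ i' : Fin n, i' ≠ i →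
      ∑ T : Finset (Fin n), (if ({i, i'} : Finset (Fin n)) ⊆ T then prodP q T else 0)
        = q i * q i' := by
    intro i' hne
    rw [sum_superset_prodP q {i, i'}, Finset.prod_pair (Ne.symm hne)]
  set K := ((univ : Finset (Fin m)).filter (fun j => 0 < s i j)) with hK
  -- split
  have hsplit : prE q (fun T => i ∈ T)
      = prE q (fun T => i ∈ altSet s T)
        + prE q (fun T => i ∈ T ∧ i ∉ altSet s T) := by
    unfold prE
    rw [← Finset.sum_add_distrib]
    refine Finset.sum_congr rfl (fun T _ => ?_)
    by_cases h1 : i ∈ altSet s T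
    · have h2 : i ∈ T := (Finset.mem_filter.mp h1).1
      simp [h1, h2]
    · by_cases h2 : i ∈ T <;> simp [h1, h2]
  -- step 3: failure of the alteration condition forces a large erased sum
  have step3 : ∀ T : Finset (Fin n), i ∈ T → i ∉ altSet s T →
      ∃ j ∈ K, 1/2 < ∑ i' ∈ T.erase i, s i' j := by
    intro T hiT hialt
    rw [altSet, Finset.mem_filter, not_and] at hialt
    have hcond := hialt hiT
    push_neg at hcond
    obtain ⟨j, hsij, hbad⟩ := hcond
    refine ⟨j, Finset.mem_filter.mpr ⟨Finset.mem_univ j, hsij⟩, ?_⟩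
    by_cases hbig : ∀ i' ∈ T, i' ≠ i → s i' j ≤ 1/2
    · -- small-sum case
      have hsum : 1 < ∑ i' ∈ T.filter (fun i'' => 0 < s i'' j ∧ s i'' j ≤ 1/2), s i' j :=
        hbad hbig
      have h1 : ∑ i' ∈ (T.erase i).filter (fun i'' => 0 < s i'' j ∧ s i'' j ≤ 1/2), s i' j
          ≤ ∑ i' ∈ T.erase i, s i' j :=
        Finset.sum_le_sum_of_subset_of_nonneg (Finset.filter_subset _ _)
          (fun i' _ _ => (hs i' j).1)
      have herase : (T.erase i).filter (fun i'' => 0 < s i'' j ∧ s i'' j ≤ 1/2)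
          = (T.filter (fun i'' => 0 < s i'' j ∧ s i'' j ≤ 1/2)).erase i := by
        ext a
        simp only [Finset.mem_erase, Finset.mem_filter]
        tauto
      have h2 : ∑ i' ∈ T.filter (fun i'' => 0 < s i'' j ∧ s i'' j ≤ 1/2), s i' j
          ≤ (∑ i' ∈ (T.erase i).filter (fun i'' => 0 < s i'' j ∧ s i'' j ≤ 1/2), s i' j)
            + 1/2 := by
        rw [herase]
        by_cases hi : i ∈ T.filter (fun i'' => 0 < s i'' j ∧ s i'' j ≤ 1/2)
        · rw [← Finset.sum_erase_add _ _ hi]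
          have : s i j ≤ 1/2 := (Finset.mem_filter.mp hi).2.2
          linarith
        · rw [Finset.erase_eq_of_notMem hi]
          linarith
      linarith
    · -- big-item case
      push_neg at hbig
      obtain ⟨i', hi'T, hi'ne, hi'big⟩ := hbig
      have hi'mem : i' ∈ T.erase i := Finset.mem_erase.mpr ⟨hi'ne, hi'T⟩
      have := Finset.single_le_sum (f := fun i'' => s i'' j)
        (fun a _ => (hs a j).1) hi'mem
      linarith
  -- step 4: Markov bound for each constraint j
  have step4 : ∀ j : Fin m,
      ∑ T : Finset (Fin n),
        (if i ∈ T ∧ 1/2 < ∑ i' ∈ T.erase i, s i' j then prodP q T else 0)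
        ≤ 2 * q i / (α * k) := by
    intro j
    have pointwise : ∀ T : Finset (Fin n),
        (if i ∈ T ∧ 1/2 < ∑ i' ∈ T.erase i, s i' j then prodP q T else 0)
          ≤ 2 * ∑ i' ∈ (univ : Finset (Fin n)).erase i,
              s i' j * (if ({i, i'} : Finset (Fin n)) ⊆ T then prodP q T else 0) := by
      intro T
      have hRHSnn : 0 ≤ ∑ i' ∈ (univ : Finset (Fin n)).erase i,
          s i' j * (if ({i, i'} : Finset (Fin n)) ⊆ T then prodP q T else 0) := by
        apply Finset.sum_nonneg
        intro i' _
        apply mul_nonneg (hs i' j).1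
        split
        · exact hP T
        · exact le_refl 0
      by_cases h : i ∈ T ∧ 1/2 < ∑ i' ∈ T.erase i, s i' j
      · rw [if_pos h]
        obtain ⟨hiT, hsum⟩ := h
        have heq : ∑ i' ∈ (univ : Finset (Fin n)).erase i,
            s i' j * (if ({i, i'} : Finset (Fin n)) ⊆ T then prodP q T else 0)
            = ∑ i' ∈ T.erase i, s i' j * prodP q T := by
          rw [← Finset.sum_subset (Finset.erase_subset_erase i (Finset.subset_univ T))
            (fun i' hi'univ hi'T => ?_)]
          · refine Finset.sum_congr rfl (fun i' hi' => ?_)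
            have hi'T : i' ∈ T := Finset.mem_of_mem_erase hi'
            have hsub : ({i, i'} : Finset (Fin n)) ⊆ T := by
              intro a ha
              rcases Finset.mem_insert.mp ha with h | h
              · exact h ▸ hiT
              · exact (Finset.mem_singleton.mp h) ▸ hi'T
            rw [if_pos hsub]
          · have hne : i' ≠ i := (Finset.mem_erase.mp hi'univ).1
            have hnotT : i' ∉ T := fun hc => hi'T (Finset.mem_erase.mpr ⟨hne, hc⟩)
            have : ¬ (({i, i'} : Finset (Fin n)) ⊆ T) := fun hc =>
              hnotT (hc (by simp))
            rw [if_neg this, mul_zero]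
        rw [heq, ← Finset.sum_mul]
        nlinarith [hP T, hsum]
      · rw [if_neg h]; linarith
    calc ∑ T : Finset (Fin n),
        (if i ∈ T ∧ 1/2 < ∑ i' ∈ T.erase i, s i' j then prodP q T else 0)
        ≤ ∑ T : Finset (Fin n), 2 * ∑ i' ∈ (univ : Finset (Fin n)).erase i,
            s i' j * (if ({i, i'} : Finset (Fin n)) ⊆ T then prodP q T else 0) :=
          Finset.sum_le_sum (fun T _ => pointwise T)
      _ = 2 * ∑ i' ∈ (univ : Finset (Fin n)).erase i,
            s i' j * (q i * q i') := by
          rw [← Finset.mul_sum]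
          congr 1
          rw [Finset.sum_comm]
          refine Finset.sum_congr rfl (fun i' hi' => ?_)
          rw [← Finset.mul_sum, hpair i' (Finset.mem_erase.mp hi').1]
      _ ≤ 2 * ∑ i', s i' j * (q i * q i') := by
          apply mul_le_mul_of_nonneg_left _ (by norm_num)
          apply Finset.sum_le_sum_of_subset_of_nonneg (Finset.subset_univ _)
          intro i' _ _
          exact mul_nonneg (hs i' j).1 (mul_nonneg (hq01 i).1 (hq01 i').1)
      _ = ∑ i', 2 * (s i' j * (q i * q i')) := by rw [Finset.mul_sum]
      _ = ∑ i', 2 * q i * (s i' j * x i' / (α * k)) :=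
          Finset.sum_congr rfl (fun i' _ => by rw [hq i']; ring)
      _ = 2 * q i * ((∑ i', s i' j * x i') / (α * k)) := by
          rw [Finset.sum_div, Finset.mul_sum]
      _ ≤ 2 * q i * (1 / (α * k)) := by
          apply mul_le_mul_of_nonneg_left _ (mul_nonneg (by norm_num) (hq01 i).1)
          gcongr
          exact hLP j
      _ = 2 * q i / (α * k) := by ring
  -- union bound
  have hbadle : prE q (fun T => i ∈ T ∧ i ∉ altSet s T) ≤ 2 * q i / α := by
    have h1 : prE q (fun T => i ∈ T ∧ i ∉ altSet s T)
        ≤ ∑ j ∈ K, ∑ T : Finset (Fin n),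
            (if i ∈ T ∧ 1/2 < ∑ i' ∈ T.erase i, s i' j then prodP q T else 0) := by
      unfold prE
      rw [Finset.sum_comm]
      apply Finset.sum_le_sum
      intro T _
      by_cases hb : i ∈ T ∧ i ∉ altSet s T
      · obtain ⟨j, hjK, hj⟩ := step3 T hb.1 hb.2
        rw [if_pos hb]
        have hnn : ∀ j' ∈ K,
            0 ≤ (if i ∈ T ∧ 1/2 < ∑ i' ∈ T.erase i, s i' j' then prodP q T else 0) := by
          intro j' _
          split
          · exact hP T
          · exact le_refl 0
        have hthis := Finset.single_le_sum (f := fun j' =>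
          (if i ∈ T ∧ 1/2 < ∑ i' ∈ T.erase i, s i' j' then prodP q T else 0)) hnn hjK
        beta_reduce at hthis
        rwa [if_pos ⟨hb.1, hj⟩] at hthis
      · rw [if_neg hb]
        apply Finset.sum_nonneg
        intro j' _
        split
        · exact hP T
        · exact le_refl 0
    have h2 : ∑ j ∈ K, (∑ T : Finset (Fin n),
          (if i ∈ T ∧ 1/2 < ∑ i' ∈ T.erase i, s i' j then prodP q T else 0))
        ≤ ∑ _j ∈ K, 2 * q i / (α * k) :=
      Finset.sum_le_sum (fun j _ => step4 j)
    have h3 : ∑ _j ∈ K, 2 * q i / (α * k) = (K.card : ℝ) * (2 * q i / (α * k)) := by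
      rw [Finset.sum_const, nsmul_eq_mul]
    have hk0 : (0:ℝ) < (k : ℝ) := by
      by_contra hc
      push_neg at hc
      nlinarith
    have h4 : (K.card : ℝ) * (2 * q i / (α * k)) ≤ (k : ℝ) * (2 * q i / (α * k)) := by
      apply mul_le_mul_of_nonneg_right
      · exact_mod_cast hsparse i
      · exact div_nonneg (mul_nonneg (by norm_num) (hq01 i).1) hαk0.le
    have h5 : (k : ℝ) * (2 * q i / (α * k)) = 2 * q i / α := by
      field_simp
    linarith
  have hfin : (1 - 2 / α) * q i = q i - 2 * q i / α := by ring
  rw [hmarg]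
  rw [hmarg] at hsplit
  linarith
end

section
/- Let x ∈ [0,1]^n be LP-feasible for a k-column-sparse packing instance, let w ∈ ℝ_{≥0}^n, and let S be a random subset of [n] including each item i independently with probability x_i/(4k). Let Alt(T) = { i ∈ T : for every j ∈ N(i), T contains no item i' ≠ i with s_{i'j} > 1/2, and Σ_{i' ∈ T : 0 < s_{i'j} ≤ 1/2} s_{i'j} ≤ 1 }. Then Alt(S) is always feasible for the instance, and E[ Σ_{i ∈ Alt(S)} w_i ] ≥ (1/(8k)) · Σ_{i=1}^n w_i x_i. (Hence randomized rounding with alteration is an 8k-approximation for k-column-sparse packing integer programs relative to the LP optimum.) -/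
open Finset
open scoped Classical BigOperators

/-- Expectation of `g(S)` where `S` is drawn from the product distribution with
marginals `q`. -/
noncomputable def exV {n : ℕ} (q : Fin n → ℝ) (g : Finset (Fin n) → ℝ) : ℝ :=
  ∑ T : Finset (Fin n), prodP q T * g T

/-!
Feasibility: if some item of `Alt(T)` is big for `j`, it is the only item of `Alt(T)` using `j`;
otherwise any item of `Alt(T)` using `j` certifies that all items of `T` using `j` are small, of
total size at most `1`.

Approximation: if `i ∈ S` is discarded, then for some `j ∈ N(i)` the other items of `S` have total
size more than `1/2` on `j` (a single big item already does). By Markov's inequality and a union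
bound over the at most `k` constraints of `i`, this has probability at most
`k · q_i · 2 ∑_{i'} s_{i'j} q_{i'} ≤ q_i / 2`, using the LP constraint and `q = x / (4k)`.
So `P[i ∈ Alt(S)] ≥ q_i / 2 = x_i / (8k)`, and linearity of expectation concludes.
-/

section ProductDistribution

variable {n : ℕ} {q : Fin n → ℝ}

lemma prodP_nonneg (hq : ∀ i, q i ∈ Set.Icc (0 : ℝ) 1) (T : Finset (Fin n)) :
    0 ≤ prodP q T :=
  mul_nonneg (prod_nonneg fun i _ => (hq i).1) (prod_nonneg fun i _ => sub_nonneg.2 (hq i).2)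

lemma exV_mono (hq : ∀ i, q i ∈ Set.Icc (0 : ℝ) 1) {f g : Finset (Fin n) → ℝ}
    (hfg : ∀ T, f T ≤ g T) : exV q f ≤ exV q g :=
  sum_le_sum fun T _ => mul_le_mul_of_nonneg_left (hfg T) (prodP_nonneg hq T)

lemma exV_add (f g : Finset (Fin n) → ℝ) :
    exV q (fun T => f T + g T) = exV q f + exV q g := by
  simp only [exV, mul_add, sum_add_distrib]

lemma exV_const_mul (c : ℝ) (f : Finset (Fin n) → ℝ) :
    exV q (fun T => c * f T) = c * exV q f := by
  simp only [exV, mul_sum]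
  exact sum_congr rfl fun T _ => by ring

lemma exV_sum {ι : Type*} (I : Finset ι) (f : ι → Finset (Fin n) → ℝ) :
    exV q (fun T => ∑ i ∈ I, f i T) = ∑ i ∈ I, exV q (f i) := by
  simp only [exV, mul_sum]
  exact sum_comm

lemma exV_indicator_subset (q : Fin n → ℝ) (A : Finset (Fin n)) :
    exV q (fun T => if A ⊆ T then 1 else 0) = ∏ a ∈ A, q a := by
  have hterm : ∀ T : Finset (Fin n), prodP q T * (if A ⊆ T then 1 else 0)
      = (∏ i ∈ T, q i) * ∏ i ∈ univ \ T, (if i ∈ A then 0 else 1 - q i) := by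
    intro T
    rw [← compl_eq_univ_sdiff]
    split_ifs with hAT
    · rw [mul_one, prodP]
      exact congrArg _ <| prod_congr rfl fun i hi =>
        (if_neg fun hiA => mem_compl.1 hi (hAT hiA)).symm
    · obtain ⟨a, haA, haT⟩ := not_subset.1 hAT
      rw [mul_zero, prod_eq_zero (mem_compl.2 haT) (by rw [if_pos haA]), mul_zero]
  simp only [exV, hterm]
  rw [← powerset_univ, ← prod_add, ← univ_inter A, ← prod_ite_mem]
  exact prod_congr rfl fun i _ => by rw [univ_inter]; split_ifs <;> ring

lemma exV_indicator_mem (q : Fin n → ℝ) (i : Fin n) :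
    exV q (fun T => if i ∈ T then 1 else 0) = q i := by
  simpa only [singleton_subset_iff, prod_singleton] using exV_indicator_subset q {i}

lemma exV_indicator_pair (q : Fin n → ℝ) {i i' : Fin n} (h : i ≠ i') :
    exV q (fun T => if {i, i'} ⊆ T then 1 else 0) = q i * q i' := by
  rw [exV_indicator_subset, prod_pair h]

lemma exV_sum_mem {ι : Type*} [Fintype ι] [DecidableEq ι] (A : Finset (Fin n) → Finset ι)
    (w : ι → ℝ) :
    exV q (fun T => ∑ i ∈ A T, w i) = ∑ i, w i * exV q (fun T => if i ∈ A T then 1 else 0) := by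
  simp_rw [← exV_const_mul, ← exV_sum, mul_ite, mul_one, mul_zero, sum_ite_mem, univ_inter]

end ProductDistribution

lemma div_four_mul_mem_Icc {x : ℝ} (hx : x ∈ Set.Icc (0 : ℝ) 1) (k : ℕ) :
    x / (4 * k) ∈ Set.Icc (0 : ℝ) 1 := by
  refine ⟨div_nonneg hx.1 (by positivity), ?_⟩
  rcases k.eq_zero_or_pos with rfl | hk
  · simp
  · have hk1 : (1 : ℝ) ≤ k := by exact_mod_cast hk
    exact (div_le_self hx.1 (by linarith)).trans hx.2

section Alteration

variable {n m : ℕ} {s : Fin n → Fin m → ℝ}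

lemma sum_altSet_le_one (hs : ∀ i j, s i j ∈ Set.Icc (0 : ℝ) 1) (T : Finset (Fin n))
    (j : Fin m) : ∑ i ∈ altSet s T, s i j ≤ 1 := by
  by_cases hsupp : ∃ i₀ ∈ altSet s T, 0 < s i₀ j
  swap
  · push Not at hsupp
    exact (sum_eq_zero fun i hi => le_antisymm (hsupp i hi) (hs i j).1).trans_le zero_le_one
  obtain ⟨i₀, hi₀, hpos⟩ := hsupp
  obtain ⟨hi₀T, hi₀cond⟩ := mem_filter.1 hi₀
  obtain ⟨hothers, hsmall⟩ := hi₀cond j hpos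
  rcases le_or_gt (s i₀ j) (1 / 2) with hi₀small | hi₀big
  · calc ∑ i ∈ altSet s T, s i j = ∑ i ∈ (altSet s T).filter (fun i => 0 < s i j), s i j :=
          (sum_filter_of_ne fun i _ hne => lt_of_le_of_ne (hs i j).1 hne.symm).symm
      _ ≤ ∑ i ∈ T.filter (fun i => 0 < s i j ∧ s i j ≤ 1 / 2), s i j := by
          refine sum_le_sum_of_subset_of_nonneg (fun i hi => ?_) fun i _ _ => (hs i j).1
          obtain ⟨hiA, hipos⟩ := mem_filter.1 hi
          have hiT := (mem_filter.1 hiA).1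
          refine mem_filter.2 ⟨hiT, hipos, ?_⟩
          rcases eq_or_ne i i₀ with rfl | hne
          exacts [hi₀small, hothers i hiT hne]
      _ ≤ 1 := hsmall
  · rw [sum_eq_single_of_mem i₀ hi₀ fun i hi hne => ?_]
    · exact (hs i₀ j).2
    by_contra hne0
    have hipos : 0 < s i j := lt_of_le_of_ne (hs i j).1 (Ne.symm hne0)
    have := ((mem_filter.1 hi).2 j hipos).1 i₀ hi₀T hne.symm
    linarith

lemma exists_crowded_of_notMem_altSet (hs0 : ∀ i j, 0 ≤ s i j) {T : Finset (Fin n)}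
    {i : Fin n} (hiT : i ∈ T) (hi : i ∉ altSet s T) :
    ∃ j, 0 < s i j ∧ 1 < 2 * ∑ i' ∈ T.erase i, s i' j := by
  simp only [altSet, mem_filter, hiT, true_and, not_forall] at hi
  obtain ⟨j, hpos, hbad⟩ := hi
  refine ⟨j, hpos, ?_⟩
  by_cases hbig : ∃ i' ∈ T, i' ≠ i ∧ 1 / 2 < s i' j
  · obtain ⟨i', hi'T, hne, hi'big⟩ := hbig
    have := single_le_sum (fun k _ => hs0 k j) (mem_erase.2 ⟨hne, hi'T⟩)
    linarith
  push Not at hbig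
  set F := T.filter (fun i' => 0 < s i' j ∧ s i' j ≤ 1 / 2)
  have hF : 1 < ∑ i' ∈ F, s i' j := by
    by_contra h
    exact hbad ⟨hbig, not_lt.1 h⟩
  have hFi : ∑ i' ∈ F, s i' j ≤ ∑ i' ∈ F.erase i, s i' j + 1 / 2 := by
    by_cases hiF : i ∈ F
    · rw [← add_sum_erase F _ hiF]
      linarith [(mem_filter.1 hiF).2.2]
    · rw [erase_eq_of_notMem hiF]
      linarith
  have hFT : ∑ i' ∈ F.erase i, s i' j ≤ ∑ i' ∈ T.erase i, s i' j :=
    sum_le_sum_of_subset_of_nonneg (erase_subset_erase i (filter_subset _ _))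
      fun k _ _ => hs0 k j
  linarith

/-- Union bound over the constraints of `i`, and Markov's inequality for each of them. -/
lemma indicator_mem_le_altSet_add_crowding (hs0 : ∀ i j, 0 ≤ s i j) (T : Finset (Fin n))
    (i : Fin n) :
    (if i ∈ T then 1 else 0) ≤ (if i ∈ altSet s T then 1 else 0) +
      ∑ j ∈ univ.filter (fun j => 0 < s i j), ∑ i' ∈ univ.erase i,
        2 * s i' j * (if {i, i'} ⊆ T then 1 else 0) := by
  have hterm : ∀ j i', 0 ≤ 2 * s i' j * (if {i, i'} ⊆ T then (1 : ℝ) else 0) := fun j i' =>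
    mul_nonneg (mul_nonneg zero_le_two (hs0 i' j)) (by split_ifs <;> norm_num)
  have hcrowd_nonneg : ∀ j, 0 ≤ ∑ i' ∈ univ.erase i,
      2 * s i' j * (if {i, i'} ⊆ T then (1 : ℝ) else 0) := fun j =>
    sum_nonneg fun i' _ => hterm j i'
  by_cases hiA : i ∈ altSet s T
  · rw [if_pos (mem_filter.1 hiA).1, if_pos hiA]
    linarith [sum_nonneg fun j (_ : j ∈ univ.filter (fun j => 0 < s i j)) => hcrowd_nonneg j]
  by_cases hiT : i ∈ T
  swap
  · rw [if_neg hiT, if_neg hiA, zero_add]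
    exact sum_nonneg fun j _ => hcrowd_nonneg j
  obtain ⟨j, hpos, hcrowd⟩ := exists_crowded_of_notMem_altSet hs0 hiT hiA
  have hj : ∑ i' ∈ univ.erase i, 2 * s i' j * (if {i, i'} ⊆ T then (1 : ℝ) else 0)
      = 2 * ∑ i' ∈ T.erase i, s i' j := by
    simp only [insert_subset_iff, singleton_subset_iff, hiT, true_and, mul_ite, mul_one,
      mul_zero, sum_ite_mem, erase_inter, univ_inter, mul_sum]
  rw [if_pos hiT, if_neg hiA, zero_add]
  calc (1 : ℝ) ≤ 2 * ∑ i' ∈ T.erase i, s i' j := hcrowd.le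
    _ = ∑ i' ∈ univ.erase i, 2 * s i' j * (if {i, i'} ⊆ T then 1 else 0) := hj.symm
    _ ≤ _ := single_le_sum (fun j _ => hcrowd_nonneg j) (mem_filter.2 ⟨mem_univ j, hpos⟩)

end Alteration

lemma sum_erase_crowding_le {n m k : ℕ} {s : Fin n → Fin m → ℝ} {x q : Fin n → ℝ}
    (hs0 : ∀ i j, 0 ≤ s i j) (hx0 : ∀ i, 0 ≤ x i) (hq : ∀ i, q i = x i / (4 * k))
    {j : Fin m} (hLP : ∑ i, s i j * x i ≤ 1) (i : Fin n) :
    ∑ i' ∈ univ.erase i, 2 * s i' j * (q i * q i') ≤ q i / (2 * k) := by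
  have hqi : 0 ≤ q i := by rw [hq i]; have := hx0 i; positivity
  calc ∑ i' ∈ univ.erase i, 2 * s i' j * (q i * q i')
      ≤ ∑ i', 2 * s i' j * (q i * q i') :=
        sum_le_sum_of_subset_of_nonneg (erase_subset i univ) fun i' _ _ => by
          rw [hq i']; have := hs0 i' j; have := hx0 i'; positivity
    _ = q i / (2 * k) * ∑ i', s i' j * x i' := by
        rw [mul_sum]
        exact sum_congr rfl fun i' _ => by rw [hq i']; ring
    _ ≤ q i / (2 * k) := mul_le_of_le_one_right (by positivity) hLP

lemma half_le_exV_indicator_mem_altSet {n m k : ℕ} {s : Fin n → Fin m → ℝ} {x q : Fin n → ℝ}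
    (hs0 : ∀ i j, 0 ≤ s i j) (hx0 : ∀ i, 0 ≤ x i) (hLP : ∀ j, ∑ i, s i j * x i ≤ 1)
    (hq : ∀ i, q i = x i / (4 * k)) (hqI : ∀ i, q i ∈ Set.Icc (0 : ℝ) 1) {i : Fin n}
    (hsparse : (univ.filter (fun j => 0 < s i j)).card ≤ k) :
    q i / 2 ≤ exV q (fun T => if i ∈ altSet s T then 1 else 0) := by
  have hbound := exV_mono hqI (indicator_mem_le_altSet_add_crowding hs0 · i)
  rw [exV_indicator_mem, exV_add, exV_sum] at hbound
  have hcrowd : ∑ j ∈ univ.filter (fun j => 0 < s i j), exV q (fun T => ∑ i' ∈ univ.erase i,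
      2 * s i' j * (if {i, i'} ⊆ T then 1 else 0)) ≤ q i / 2 :=
    calc _ = ∑ j ∈ univ.filter (fun j => 0 < s i j),
          ∑ i' ∈ univ.erase i, 2 * s i' j * (q i * q i') := by
          refine sum_congr rfl fun j _ => ?_
          rw [exV_sum]
          exact sum_congr rfl fun i' hi' => by
            rw [exV_const_mul, exV_indicator_pair q (ne_of_mem_erase hi').symm]
      _ ≤ ∑ j ∈ univ.filter (fun j => 0 < s i j), q i / (2 * k) :=
          sum_le_sum fun j _ => sum_erase_crowding_le hs0 hx0 hq (hLP j) i
      _ ≤ k * (q i / (2 * k)) := by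
          rw [sum_const, nsmul_eq_mul]
          exact mul_le_mul_of_nonneg_right (by exact_mod_cast hsparse)
            (div_nonneg (hqI i).1 (by positivity))
      _ = q i / 2 * (k / k) := by ring
      _ ≤ q i / 2 := mul_le_of_le_one_right (by linarith [(hqI i).1]) (div_self_le_one _)
  linarith

/-- randomized rounding (with probabilities `x i/(4k)`) followed by
alteration always yields a feasible set, and the expected weight of the altered
set is at least `1/(8k)` times the LP value: an `8k`-approximation. -/
theorem eight_k_approximation (n m k : ℕ) (s : Fin n → Fin m → ℝ)
    (hs : ∀ i j, s i j ∈ Set.Icc (0:ℝ) 1)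
    (hsparse : ∀ i, ((univ : Finset (Fin m)).filter (fun j => 0 < s i j)).card ≤ k)
    (x : Fin n → ℝ) (hx : ∀ i, x i ∈ Set.Icc (0:ℝ) 1)
    (hLP : ∀ j, ∑ i, s i j * x i ≤ 1)
    (w : Fin n → ℝ) (hw : ∀ i, 0 ≤ w i)
    (q : Fin n → ℝ) (hq : ∀ i, q i = x i / (4 * k)) :
    (∀ T : Finset (Fin n), ∀ j : Fin m, ∑ i ∈ altSet s T, s i j ≤ 1) ∧
    exV q (fun T => ∑ i ∈ altSet s T, w i) ≥ (1 / (8 * k)) * ∑ i, w i * x i := by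
  have hs0 : ∀ i j, 0 ≤ s i j := fun i j => (hs i j).1
  have hqI : ∀ i, q i ∈ Set.Icc (0 : ℝ) 1 := fun i => by
    rw [hq i]; exact div_four_mul_mem_Icc (hx i) k
  refine ⟨sum_altSet_le_one hs, ?_⟩
  calc (1 / (8 * k)) * ∑ i, w i * x i = ∑ i, w i * (q i / 2) := by
        rw [mul_sum]
        exact sum_congr rfl fun i _ => by rw [hq i]; ring
    _ ≤ ∑ i, w i * exV q (fun T => if i ∈ altSet s T then 1 else 0) :=
        sum_le_sum fun i _ => mul_le_mul_of_nonneg_left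
          (half_le_exV_indicator_mem_altSet hs0 (fun i => (hx i).1) hLP hq hqI (hsparse i)) (hw i)
    _ = exV q (fun T => ∑ i ∈ altSet s T, w i) := (exV_sum_mem (altSet s) w).symm
end

section
/- Fix sizes s_{ij} ∈ [0,1] for i ∈ [n], j ∈ [m]. For any subset T ⊆ [n], let Alt'(T) = { i ∈ T : for every j ∈ N(i), Σ_{i' ∈ T : s_{i'j} ≥ s_{ij}} s_{i'j} ≤ 1 }. Then Alt'(T) is feasible: for every constraint j ∈ [m], Σ_{i ∈ Alt'(T)} s_{ij} ≤ 1. -/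
open Finset
open scoped Classical BigOperators

/-- The alteration map of the improved algorithm: keep `i ∈ T` iff for every
constraint `j` in which `i` participates, the total size of the items of `T`
that are at least as large as `i` in constraint `j` is at most `1`. -/
noncomputable def altSet' {n m : ℕ} (s : Fin n → Fin m → ℝ) (T : Finset (Fin n)) :
    Finset (Fin n) :=
  T.filter (fun i => ∀ j, 0 < s i j →
    (∑ i' ∈ T.filter (fun i'' => s i j ≤ s i'' j), s i' j) ≤ 1)

/-- the altered set is always feasible. -/
theorem altSet'_feasible (n m : ℕ) (s : Fin n → Fin m → ℝ)
    (hs : ∀ i j, s i j ∈ Set.Icc (0:ℝ) 1)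
    (T : Finset (Fin n)) :
    ∀ j : Fin m, ∑ i ∈ altSet' s T, s i j ≤ 1 := by
  intro j
  set A := (altSet' s T).filter (fun i => 0 < s i j) with hA
  have hsum : ∑ i ∈ altSet' s T, s i j = ∑ i ∈ A, s i j := by
    rw [hA, Finset.sum_filter_of_ne]
    intro i _ hne
    rcases lt_or_eq_of_le (hs i j).1 with h | h
    · exact h
    · exact absurd h.symm hne
  rw [hsum]
  rcases A.eq_empty_or_nonempty with h | h
  · simp [h]
  · obtain ⟨i₀, hi₀A, hmin⟩ := A.exists_min_image (fun i => s i j) h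
    have hi₀pos : 0 < s i₀ j := (Finset.mem_filter.mp hi₀A).2
    have hi₀alt : i₀ ∈ altSet' s T := (Finset.mem_filter.mp hi₀A).1
    have hi₀cond := (Finset.mem_filter.mp hi₀alt).2 j hi₀pos
    refine le_trans (Finset.sum_le_sum_of_subset_of_nonneg ?_ ?_) hi₀cond
    · intro i hi
      obtain ⟨hialt, hipos⟩ := Finset.mem_filter.mp hi
      exact Finset.mem_filter.mpr ⟨(Finset.mem_filter.mp hialt).1, hmin i hi⟩
    · intro i _ _
      exact (hs i j).1
end

section
/- Fix k ≥ 1, let n = m = 2k−1 with indices taken modulo n, let 0 < ε < 1/k, and define sizes s_{ij} = 1 if i = j, s_{ij} = ε if j ∈ {i+1, …, i+k−1 (mod n)}, and s_{ij} = 0 otherwise, with all capacities 1 and all weights w_i = 1. Then: (a) each item participates in at most k constraints, so the instance is k-column-sparse; (b) the vector x with x_i = 1 − kε for all i is feasible for the strengthened LP, so the LP optimum is at least (1 − kε)(2k−1); and (c) every feasible 0-1 solution contains at most one item. Consequently, the integrality gap of the strengthened LP is at least (1 − kε)(2k−1), and hence at least 2k−1 as ε → 0. -/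
open Finset
open scoped Classical BigOperators

/-! Every column of the instance holds the diagonal `1` and at most `k - 1` entries `ε`, so the
uniform vector `1 - kε` is LP-feasible, and the only big item of constraint `j` is `j` itself.
Since `n = 2k - 1`, of two distinct items one lies among the `k - 1` cyclic successors of the
other, so one has size `ε > 0` in the constraint where the other has size `1`: no two items fit
together. -/

def IsCyclicSucc {n : ℕ} (k : ℕ) (i j : Fin n) : Prop :=
  ∃ a : ℕ, 1 ≤ a ∧ a ≤ k - 1 ∧ (j : ℕ) = ((i : ℕ) + a) % n

noncomputable def gapSize {n : ℕ} (k : ℕ) (ε : ℝ) (i j : Fin n) : ℝ :=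
  if i = j then 1 else if IsCyclicSucc k i j then ε else 0

section

variable {n k : ℕ} {ε : ℝ} {i j : Fin n}

theorem IsCyclicSucc.two_le (h : IsCyclicSucc k i j) : 2 ≤ k := by
  obtain ⟨a, ha1, hak, -⟩ := h
  omega

theorem gapSize_self : gapSize k ε i i = 1 := if_pos rfl

theorem gapSize_nonneg (hε : 0 ≤ ε) (i j : Fin n) : 0 ≤ gapSize k ε i j := by
  unfold gapSize
  split_ifs <;> norm_num [hε]

theorem filter_half_lt_gapSize_eq_singleton (hεk : ε * k < 1) (j : Fin n) :
    ({i | 1 / 2 < gapSize k ε i j} : Finset (Fin n)) = {j} := by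
  ext i
  simp only [mem_filter, mem_univ, true_and, mem_singleton]
  refine ⟨fun h => ?_, fun h => by norm_num [h, gapSize_self]⟩
  by_contra hij
  unfold gapSize at h
  rw [if_neg hij] at h
  split_ifs at h with hsucc
  · have : (2 : ℝ) ≤ k := by exact_mod_cast hsucc.two_le
    nlinarith
  · norm_num at h

variable [NeZero n]

theorem isCyclicSucc_iff (hkn : k ≤ n) :
    IsCyclicSucc k i j ↔ ((j - i : Fin n) : ℕ) ∈ Icc 1 (k - 1) := by
  rw [mem_Icc]
  constructor
  · rintro ⟨a, ha1, hak, hj⟩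
    have hj' : j = i + ⟨a, by omega⟩ := Fin.ext (by rw [hj, Fin.val_add])
    rw [hj', add_sub_cancel_left]
    exact ⟨ha1, hak⟩
  · intro ha
    refine ⟨_, ha.1, ha.2, ?_⟩
    rw [← Fin.val_add, add_sub_cancel]

theorem IsCyclicSucc.ne (hkn : k ≤ n) (h : IsCyclicSucc k i j) : i ≠ j := by
  rintro rfl
  simpa using ((isCyclicSucc_iff hkn).1 h)

theorem isCyclicSucc_or_isCyclicSucc (hkn : k ≤ n) (hnk : n + 1 ≤ 2 * k) {p q : Fin n}
    (hpq : p ≠ q) : IsCyclicSucc k p q ∨ IsCyclicSucc k q p := by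
  simp only [isCyclicSucc_iff hkn, mem_Icc]
  rcases lt_or_gt_of_ne hpq with h | h <;>
  · have h₁ := Fin.coe_sub_iff_le.2 h.le
    have h₂ := Fin.coe_sub_iff_lt.2 h
    have := Fin.lt_def.1 h
    omega

theorem gapSize_eq_add (hkn : k ≤ n) (i j : Fin n) :
    gapSize k ε i j = (if i = j then 1 else 0) + if IsCyclicSucc k i j then ε else 0 := by
  unfold gapSize
  by_cases hij : i = j
  · subst hij
    simp [show ¬IsCyclicSucc k i i from fun h => h.ne hkn rfl]
  · simp [hij]

theorem card_filter_gapSize_pos_le (hk : 1 ≤ k) (hkn : k ≤ n) (i : Fin n) :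
    #{j | 0 < gapSize k ε i j} ≤ k := by
  calc #{j | 0 < gapSize k ε i j} ≤ #(range k) :=
        card_le_card_of_injOn (fun j => ((j - i : Fin n) : ℕ)) ?_
          fun j₁ _ j₂ _ h => sub_left_injective (Fin.ext h)
    _ = k := card_range k
  intro j hj
  have hpos := (mem_filter.1 hj).2
  change ((j - i : Fin n) : ℕ) ∈ (range k : Set ℕ)
  rw [coe_range, Set.mem_Iio]
  by_cases hij : i = j
  · simp only [hij, sub_self, Fin.val_zero]
    omega
  · have hsucc : IsCyclicSucc k i j := by
      by_contra h
      simp [gapSize, hij, h] at hpos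
    have := mem_Icc.1 ((isCyclicSucc_iff hkn).1 hsucc)
    omega

theorem card_filter_isCyclicSucc_le (hkn : k ≤ n) (j : Fin n) :
    #{i | IsCyclicSucc k i j} ≤ k - 1 := by
  calc #{i | IsCyclicSucc k i j} ≤ #(Icc 1 (k - 1)) := by
        refine card_le_card_of_injOn (fun i => ((j - i : Fin n) : ℕ)) ?_ ?_
        · intro i hi
          exact (isCyclicSucc_iff hkn).1 (mem_filter.1 hi).2
        · intro i₁ _ i₂ _ h
          exact sub_right_injective (Fin.ext h)
    _ = k - 1 := by simp

theorem gapSize_of_isCyclicSucc (hkn : k ≤ n) (h : IsCyclicSucc k i j) : gapSize k ε i j = ε := by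
  rw [gapSize, if_neg (h.ne hkn), if_pos h]

theorem gapSize_pos_or_gapSize_pos (hkn : k ≤ n) (hnk : n + 1 ≤ 2 * k) (hε : 0 < ε) {p q : Fin n}
    (hpq : p ≠ q) : 0 < gapSize k ε p q ∨ 0 < gapSize k ε q p := by
  rcases isCyclicSucc_or_isCyclicSucc hkn hnk hpq with h | h
  · exact .inl (gapSize_of_isCyclicSucc hkn h ▸ hε)
  · exact .inr (gapSize_of_isCyclicSucc hkn h ▸ hε)

theorem sum_gapSize_le (hkn : k ≤ n) (hk : 1 ≤ k) (hε : 0 ≤ ε) (j : Fin n) :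
    ∑ i, gapSize k ε i j ≤ 1 + (k - 1) * ε := by
  have hcard : (#{i | IsCyclicSucc k i j} : ℝ) ≤ k - 1 := by
    rw [← Nat.cast_one, ← Nat.cast_sub hk]
    exact_mod_cast card_filter_isCyclicSucc_le hkn j
  simp only [gapSize_eq_add hkn, sum_add_distrib, sum_ite_eq', mem_univ, if_true, sum_ite,
    sum_const_zero, add_zero, sum_const, nsmul_eq_mul]
  gcongr

end

theorem card_le_one_of_forall_sum_le_one {ι : Type*} (s : ι → ι → ℝ)
    (hs : ∀ i j, 0 ≤ s i j) (hdiag : ∀ i, s i i = 1)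
    (hpair : ∀ p q, p ≠ q → 0 < s p q ∨ 0 < s q p)
    (S : Finset ι) (hS : ∀ j, ∑ i ∈ S, s i j ≤ 1) : #S ≤ 1 := by
  by_contra! hS1
  obtain ⟨p, q, hp, hq, hpq⟩ := one_lt_card_iff.1 hS1
  have key : ∀ p q, p ∈ S → q ∈ S → p ≠ q → ¬ 0 < s p q := fun p q hp hq hpq h => by
    have := add_le_sum (f := fun i => s i q) (fun i _ => hs i q) hp hq hpq
    have := hS q
    simp only [hdiag] at *
    linarith
  rcases hpair p q hpq with h | h
  · exact key p q hp hq hpq h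
  · exact key q p hq hp hpq.symm h

/-- the integrality-gap instance for the strengthened LP.
With `n = m = 2k-1`, sizes `s i i = 1`, `s i j = ε` for
`j ∈ {i+1, …, i+k-1} (mod n)` and `0` otherwise, and `x i = 1 - kε`:
(a) the instance is `k`-column sparse; (b) `x` is feasible for the
strengthened LP and has total value `(1-kε)(2k-1)`; (c) every feasible
0-1 solution has at most one item.  Hence the integrality gap is at least
`(1-kε)(2k-1)`, which tends to `2k-1` as `ε → 0`. -/
theorem strengthened_lp_gap (k : ℕ) (hk : 1 ≤ k) (ε : ℝ) (hε : 0 < ε)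
    (hε' : ε < 1 / k)
    (n : ℕ) (hn : n = 2 * k - 1)
    (s : Fin n → Fin n → ℝ)
    (hs : ∀ i j : Fin n, s i j =
      if i = j then 1
      else if ∃ a : ℕ, 1 ≤ a ∧ a ≤ k - 1 ∧ (j : ℕ) = ((i : ℕ) + a) % n then ε
      else 0)
    (x : Fin n → ℝ) (hx : ∀ i, x i = 1 - k * ε) :
    -- (a) each item participates in at most k constraints
    (∀ i : Fin n, ((univ : Finset (Fin n)).filter (fun j => 0 < s i j)).card ≤ k) ∧
    -- (b) x is feasible for the strengthened LP ...
    (∀ j : Fin n, ∑ i, s i j * x i ≤ 1 ∧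
      ∑ i ∈ univ.filter (fun i => 1/2 < s i j), x i ≤ 1) ∧
    -- ... and its total value is (1-kε)(2k-1)
    (∑ i, x i = (1 - k * ε) * (2 * k - 1)) ∧
    -- (c) every feasible integral solution has at most one item
    (∀ S' : Finset (Fin n), (∀ j : Fin n, ∑ i ∈ S', s i j ≤ 1) → S'.card ≤ 1) := by
  have hkn : k ≤ n := by omega
  have hnk : n + 1 ≤ 2 * k := by omega
  have : NeZero n := ⟨by omega⟩
  have hεk : ε * k < 1 := by rwa [lt_div_iff₀ (by positivity)] at hε'
  obtain rfl : s = gapSize k ε := funext₂ hs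
  obtain rfl : x = fun _ => 1 - k * ε := funext hx
  refine ⟨card_filter_gapSize_pos_le hk hkn, fun j => ⟨?_, ?_⟩, ?_,
    card_le_one_of_forall_sum_le_one _ (gapSize_nonneg hε.le) (fun _ => gapSize_self)
      fun _ _ => gapSize_pos_or_gapSize_pos hkn hnk hε⟩
  · calc ∑ i, gapSize k ε i j * (1 - k * ε) = (∑ i, gapSize k ε i j) * (1 - k * ε) :=
          (sum_mul ..).symm
      _ ≤ (1 + (k - 1) * ε) * (1 - k * ε) :=
          mul_le_mul_of_nonneg_right (sum_gapSize_le hkn hk hε.le j) (by linarith)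
      _ ≤ 1 := by
          have hk' : (1 : ℝ) ≤ k := by exact_mod_cast hk
          nlinarith [mul_nonneg (mul_nonneg (sub_nonneg.2 hk') hε.le) hε.le]
  · rw [filter_half_lt_gapSize_eq_singleton hεk, sum_singleton]
    have : 0 ≤ (k : ℝ) * ε := by positivity
    linarith
  · have hn' : (n : ℝ) = 2 * k - 1 := by
      rw [hn, Nat.cast_sub (by omega)]
      push_cast
      ring
    rw [sum_const, card_univ, Fintype.card_fin, nsmul_eq_mul, hn']
    ring
end
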